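/- In U_q(sp_{2n}) the entries s̄_{ij} of S̄ satisfy: (i) s̄_{ii} = ε_{i′} for all i, and s̄_{ij} = 0 for i < j; (ii) s̄_{ij} = q ε_i ε_j s_{j′i′} whenever j < i and i ≠ j′; (iii) s̄_{j′j} = −q² s_{j′j} + (q² − 1) Σ_{m=j+1}^{n} q^{m̄ − j̄} s̄_{m′m} for all j ≤ n (the sum being empty for j = n, so that s̄_{n′n} = −q² s_{n′n}). Consequently each s̄_{j′j}, j ≤ n, is an F-linear combination of the elements s_{m′m} with j ≤ m ≤ n. -/
import Mathlib


noncomputable section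

set_option synthInstance.maxHeartbeats 1000000
set_option maxHeartbeats 1000000

namespace CI

/-- The ground field F = ℂ(q). -/
abbrev F : Type := RatFunc ℂ

/-- The formal variable q. -/
def q : F := RatFunc.X

/-- The index involution i ↦ i′ = 2n+1−i (here in 0-based form i ↦ 2n−1−i). -/
def pr (n : ℕ) (i : Fin (2*n)) : Fin (2*n) := ⟨2*n - 1 - i.val, by have := i.isLt; omega⟩

/-- ε_i = 1 for i ≤ n and ε_i = −1 for i > n (1-based). -/
def eps (n : ℕ) (i : Fin (2*n)) : F := if (i : ℕ) < n then 1 else -1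

/-- (1̄,…,n̄,(n+1)̄,…,(2n)̄) = (n,…,1,−1,…,−n). -/
def bar (n : ℕ) (i : Fin (2*n)) : ℤ :=
  if (i : ℕ) < n then (n : ℤ) - (i : ℕ) else (n : ℤ) - (i : ℕ) - 1

/-- The diagonal entries of D = diag(qⁿ,…,q,q⁻¹,…,q⁻ⁿ): D_{ii} = q^{ī}. -/
def dd (n : ℕ) (i : Fin (2*n)) : F := q ^ (bar n i)

/-- The entries of the R-matrix R = Σ_{i,j} q^{δ_{ij}−δ_{ij′}} e_{ii} ⊗ e_{jj}
    + (q−q⁻¹) Σ_{i<j} e_{ij} ⊗ e_{ji}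
    − (q−q⁻¹) Σ_{i<j} q^{j̄−ī} ε_i ε_j e_{ij} ⊗ e_{i′j′}. -/
def Rm (n : ℕ) (p s : Fin (2*n) × Fin (2*n)) : F :=
  (if p.1 = s.1 ∧ p.2 = s.2 then
      q ^ ((if p.1 = p.2 then (1:ℤ) else 0) - (if p.1 = pr n p.2 then (1:ℤ) else 0)) else 0)
  + (if p.1 < p.2 ∧ s.1 = p.2 ∧ s.2 = p.1 then q - q⁻¹ else 0)
  - (if p.1 < s.1 ∧ p.2 = pr n p.1 ∧ s.2 = pr n s.1 then
      (q - q⁻¹) * q ^ (bar n s.1 - bar n p.1) * eps n p.1 * eps n s.1 else 0)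

/-- Generators t_{ij}, t̄_{ij} of the extended algebra. -/
inductive Gen (n : ℕ) : Type
  | t (i j : Fin (2*n)) : Gen n
  | tb (i j : Fin (2*n)) : Gen n

/-- The free F-algebra on the generators. -/
abbrev FA (n : ℕ) : Type := FreeAlgebra F (Gen n)

def tF (n : ℕ) (i j : Fin (2*n)) : FA n := FreeAlgebra.ι F (Gen.t i j)
def tbF (n : ℕ) (i j : Fin (2*n)) : FA n := FreeAlgebra.ι F (Gen.tb i j)

/-- The defining relations of the RTT presentation U_q(sp_{2n}): the triangularity
    and diagonal relations, the entrywise RTT relations R T₁ T₂ = T₂ T₁ R,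
    R T̄₁ T̄₂ = T̄₂ T̄₁ R, R T̄₁ T₂ = T₂ T̄₁ R, and the entrywise central relations
    T D Tᵗ D⁻¹ = T̄ D T̄ᵗ D⁻¹ = I, D Tᵗ D⁻¹ T = D T̄ᵗ D⁻¹ T̄ = I
    (where ᵗ is the twisted transposition e_{ij}ᵗ = ε_i ε_j e_{j′i′}). -/
inductive rel (n : ℕ) : FA n → FA n → Prop
  | t_upper (i j : Fin (2*n)) (h : i < j) : rel n (tF n i j) 0
  | tb_lower (i j : Fin (2*n)) (h : j < i) : rel n (tbF n i j) 0
  | t_tb_diag (i : Fin (2*n)) : rel n (tF n i i * tbF n i i) 1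
  | tb_t_diag (i : Fin (2*n)) : rel n (tbF n i i * tF n i i) 1
  | rtt_tt (i a j b : Fin (2*n)) :
      rel n (∑ k, ∑ c, Rm n (i, a) (k, c) • (tF n k j * tF n c b))
            (∑ c, ∑ l, Rm n (l, c) (j, b) • (tF n a c * tF n i l))
  | rtt_bb (i a j b : Fin (2*n)) :
      rel n (∑ k, ∑ c, Rm n (i, a) (k, c) • (tbF n k j * tbF n c b))
            (∑ c, ∑ l, Rm n (l, c) (j, b) • (tbF n a c * tbF n i l))
  | rtt_bt (i a j b : Fin (2*n)) :
      rel n (∑ k, ∑ c, Rm n (i, a) (k, c) • (tbF n k j * tF n c b))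
            (∑ c, ∑ l, Rm n (l, c) (j, b) • (tF n a c * tbF n i l))
  | cent_t1 (i j : Fin (2*n)) :
      rel n (∑ k, (dd n k * (dd n j)⁻¹ * eps n (pr n k) * eps n (pr n j)) •
              (tF n i k * tF n (pr n j) (pr n k)))
            (if i = j then 1 else 0)
  | cent_tb1 (i j : Fin (2*n)) :
      rel n (∑ k, (dd n k * (dd n j)⁻¹ * eps n (pr n k) * eps n (pr n j)) •
              (tbF n i k * tbF n (pr n j) (pr n k)))
            (if i = j then 1 else 0)
  | cent_t2 (i j : Fin (2*n)) :
      rel n (∑ k, (dd n i * (dd n k)⁻¹ * eps n (pr n i) * eps n (pr n k)) •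
              (tF n (pr n k) (pr n i) * tF n k j))
            (if i = j then 1 else 0)
  | cent_tb2 (i j : Fin (2*n)) :
      rel n (∑ k, (dd n i * (dd n k)⁻¹ * eps n (pr n i) * eps n (pr n k)) •
              (tbF n (pr n k) (pr n i) * tbF n k j))
            (if i = j then 1 else 0)

/-- The RTT presentation U_q(sp_{2n}). -/
abbrev Usp (n : ℕ) : Type := RingQuot (rel n)

/-- The generator t_{ij} of U_q(sp_{2n}). -/
def tU (n : ℕ) (i j : Fin (2*n)) : Usp n := RingQuot.mkAlgHom F (rel n) (tF n i j)

/-- The generator t̄_{ij} of U_q(sp_{2n}). -/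
def tbU (n : ℕ) (i j : Fin (2*n)) : Usp n := RingQuot.mkAlgHom F (rel n) (tbF n i j)

/-- The entries s_{ij} = Σ_{k=j}^{i} ε_k t_{ik} t̄_{jk} of the matrix S = T J T̄^u. -/
def sU (n : ℕ) (i j : Fin (2*n)) : Usp n :=
  ∑ k ∈ Finset.Icc j i, eps n k • (tU n i k * tbU n j k)

/-- The entries s̄_{ij} = ε_i ε_j Σ_{k=j}^{i} ε_{k′} t̄_{i′k′} t_{j′k′} of the
    matrix S̄ = T̄^{ut} Jᵗ Tᵗ. -/
def sbU (n : ℕ) (i j : Fin (2*n)) : Usp n :=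
  (eps n i * eps n j) • ∑ k ∈ Finset.Icc j i,
    eps n (pr n k) • (tbU n (pr n i) (pr n k) * tU n (pr n j) (pr n k))

/-- The twisted quantized enveloping algebra U_q^{tw}(gl_n): the subalgebra of
    U_q(sp_{2n}) generated by the entries of S. -/
def Utw (n : ℕ) : Subalgebra F (Usp n) :=
  Algebra.adjoin F (Set.range fun p : Fin (2*n) × Fin (2*n) => sU n p.1 p.2)

variable {n : ℕ}

lemma q_ne_zero : (q : F) ≠ 0 := RatFunc.X_ne_zero

lemma neg_smul' (a : F) (x : Usp n) : (-a) • x = -(a • x) := neg_smul a x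

lemma neg_one_smul' (x : Usp n) : (-1 : F) • x = -x := neg_one_smul F x

lemma pr_pr (i : Fin (2*n)) : pr n (pr n i) = i := by
  have := i.isLt
  simp only [pr]
  ext; simp; omega

lemma pr_lt_pr {i j : Fin (2*n)} (h : i < j) : pr n j < pr n i := by
  have hi := i.isLt; have hj := j.isLt
  simp only [pr, Fin.lt_def] at *
  omega

lemma ne_pr_self (i : Fin (2*n)) : i ≠ pr n i := by
  have := i.isLt
  intro h
  have : i.val = 2*n - 1 - i.val := congrArg Fin.val h
  omega

lemma tU_zero {i j : Fin (2*n)} (h : i < j) : tU n i j = 0 := by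
  have := RingQuot.mkAlgHom_rel F (rel.t_upper i j h)
  simpa [tU] using this

lemma tbU_zero {i j : Fin (2*n)} (h : j < i) : tbU n i j = 0 := by
  have := RingQuot.mkAlgHom_rel F (rel.tb_lower i j h)
  simpa [tbU] using this

lemma tbU_tU_diag (i : Fin (2*n)) : tbU n i i * tU n i i = 1 := by
  have := RingQuot.mkAlgHom_rel F (rel.tb_t_diag i)
  simpa [tU, tbU] using this

lemma master (i a j b : Fin (2*n)) :
    (∑ k, ∑ c, Rm n (i,a) (k,c) • (tbU n k j * tU n c b))
      = ∑ c, ∑ l, Rm n (l,c) (j,b) • (tU n a c * tbU n i l) := by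
  have := RingQuot.mkAlgHom_rel F (rel.rtt_bt i a j b)
  simpa [tU, tbU, map_sum, map_smul, map_mul] using this
/-- auxiliary: X_{AB} = Σ_j ε_j t̄_{Aj} t_{Bj} (full sum). -/
def XX (n : ℕ) (A B : Fin (2*n)) : Usp n := ∑ j, eps n j • (tbU n A j * tU n B j)

/-- auxiliary: Y_{AB} = Σ_l ε_l t_{Bl} t̄_{Al} (full sum). -/
def YY (n : ℕ) (A B : Fin (2*n)) : Usp n := ∑ l, eps n l • (tU n B l * tbU n A l)

lemma ne_pr_self' (j : Fin (2*n)) : j ≠ pr n j := by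
  have := j.isLt
  intro h
  have : j.val = 2*n - 1 - j.val := congrArg Fin.val h
  omega

lemma Rm_diag (l c j : Fin (2*n)) : Rm n (l,c) (j,j) = if l = j ∧ c = j then q else 0 := by
  have hj : j ≠ pr n j := ne_pr_self' j
  simp only [Rm]
  have h2 : ¬((l,c).1 < (l,c).2 ∧ (j,j).1 = (l,c).2 ∧ (j,j).2 = (l,c).1) := by
    rintro ⟨h1, h2, h3⟩
    simp only at *
    exact absurd (h2 ▸ h3 ▸ h1) (lt_irrefl _)
  have h3 : ¬((l,c).1 < (j,j).1 ∧ (l,c).2 = pr n (l,c).1 ∧ (j,j).2 = pr n (j,j).1) := by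
    rintro ⟨-, -, h⟩; exact hj h
  rw [if_neg h2, if_neg h3]
  simp only [add_zero, sub_zero]
  by_cases h : l = j ∧ c = j
  · obtain ⟨h1, h2⟩ := h
    subst h1; subst h2
    simp [hj, zpow_one]
  · rw [if_neg h, if_neg h]

lemma key0 (i a : Fin (2*n)) :
    (∑ k, ∑ c, Rm n (i,a) (k,c) • XX n k c) = q • YY n i a := by
  have H : (∑ j, eps n j • (∑ k, ∑ c, Rm n (i,a) (k,c) • (tbU n k j * tU n c j)))
      = ∑ j, eps n j • (∑ c, ∑ l, Rm n (l,c) (j,j) • (tU n a c * tbU n i l)) :=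
    Finset.sum_congr rfl fun j _ => by rw [master i a j j]
  have L : (∑ j, eps n j • (∑ k, ∑ c, Rm n (i,a) (k,c) • (tbU n k j * tU n c j)))
      = ∑ k, ∑ c, Rm n (i,a) (k,c) • XX n k c := by
    simp only [XX, Finset.smul_sum]
    rw [Finset.sum_comm]
    refine Finset.sum_congr rfl fun k _ => ?_
    rw [Finset.sum_comm]
    refine Finset.sum_congr rfl fun c _ => Finset.sum_congr rfl fun j _ => ?_
    rw [smul_comm]
  have R : (∑ j, eps n j • (∑ c, ∑ l, Rm n (l,c) (j,j) • (tU n a c * tbU n i l)))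
      = q • YY n i a := by
    simp only [Rm_diag, YY, Finset.smul_sum]
    simp only [ite_and, ite_smul, zero_smul, Finset.sum_ite_eq, Finset.sum_ite_eq',
      Finset.mem_univ, if_true]
    refine Finset.sum_congr rfl fun j _ => ?_
    simp only [smul_ite, smul_zero, Finset.sum_ite_eq', Finset.mem_univ, if_true, smul_smul]
    rw [mul_comm]
  rw [← L, H, R]

lemma XX_zero {A B : Fin (2*n)} (h : B < A) : XX n A B = 0 := by
  refine Finset.sum_eq_zero fun j _ => ?_
  rcases lt_or_ge j A with hj | hj
  · rw [tbU_zero hj, zero_mul, smul_zero]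
  · rw [tU_zero (lt_of_lt_of_le h hj), mul_zero, smul_zero]

lemma pr_eq_iff {A B : Fin (2*n)} : A = pr n B ↔ B = pr n A := by
  constructor <;> intro h <;> rw [h, pr_pr]

lemma dcollapse {α β M : Type*} [Fintype α] [Fintype β] [DecidableEq α] [DecidableEq β]
    [AddCommMonoid M] (a : α) (b : β) (f : α → β → M) (P : α → β → Prop)
    [∀ x y, Decidable (P x y)] (hP : ∀ x y, P x y ↔ (x = a ∧ y = b)) :
    (∑ x, ∑ y, (if P x y then f x y else 0)) = f a b := by
  rw [Finset.sum_eq_single a]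
  · rw [Finset.sum_eq_single b]
    · rw [if_pos ((hP a b).mpr ⟨rfl, rfl⟩)]
    · intro y _ hy
      rw [if_neg]
      rw [hP]
      rintro ⟨-, h⟩; exact hy h
    · intro h; exact absurd (Finset.mem_univ b) h
  · intro x _ hx
    refine Finset.sum_eq_zero fun y _ => ?_
    rw [if_neg]
    rw [hP]
    rintro ⟨h, -⟩; exact hx h
  · intro h; exact absurd (Finset.mem_univ a) h

lemma key1 (A B : Fin (2*n)) (hAB : A < B) (h : B ≠ pr n A) :
    XX n A B = q • YY n A B := by
  have h2 : A ≠ pr n B := fun hh => h (pr_eq_iff.mp hh)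
  have hRm : ∀ k c : Fin (2*n), Rm n (A,B) (k,c)
      = (if A = k ∧ B = c then (1:F) else 0) + (if k = B ∧ c = A then q - q⁻¹ else 0) := by
    intro k c
    have h1 : A ≠ B := ne_of_lt hAB
    simp only [Rm]
    have h3 : ¬((A,B).1 < (k,c).1 ∧ (A,B).2 = pr n (A,B).1 ∧ (k,c).2 = pr n (k,c).1) := by
      rintro ⟨-, hh, -⟩; exact h hh
    rw [if_neg h3, sub_zero]
    congr 1
    · by_cases hkc : A = k ∧ B = c
      · rw [if_pos hkc, if_pos hkc]
        simp [h1, h2]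
      · rw [if_neg hkc, if_neg hkc]
    · simp only [hAB, true_and]
  have e1 : (∑ k, ∑ c, (if A = k ∧ B = c then (1:F) else 0) • XX n k c) = XX n A B := by
    simp only [ite_smul, zero_smul, one_smul]
    exact dcollapse A B _ _ (fun x y => by
      constructor <;> rintro ⟨h1', h2'⟩ <;> exact ⟨h1'.symm, h2'.symm⟩)
  have e2 : (∑ k, ∑ c, (if k = B ∧ c = A then q - q⁻¹ else 0) • XX n k c)
      = (q - q⁻¹) • XX n B A := by
    simp only [ite_smul, zero_smul]
    exact dcollapse B A _ _ (fun x y => Iff.rfl)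
  have H := key0 A B
  simp only [hRm, add_smul, Finset.sum_add_distrib] at H
  rw [e1, e2, XX_zero hAB, smul_zero, add_zero] at H
  exact H

lemma lt_pr_iff {A : Fin (2*n)} : A < pr n A ↔ (A : ℕ) < n := by
  have := A.isLt
  simp only [pr, Fin.lt_def]
  omega

lemma key2 (A : Fin (2*n)) (h : A < pr n A) :
    q⁻¹ • XX n A (pr n A)
      + (∑ k, (if A < k then (-((q - q⁻¹) * q ^ (bar n k - bar n A) * eps n A * eps n k))
          • XX n k (pr n k) else 0))
      = q • YY n A (pr n A) := by
  have hRm : ∀ k c : Fin (2*n), Rm n (A, pr n A) (k,c)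
      = (if A = k ∧ pr n A = c then q⁻¹ else 0)
        + ((if k = pr n A ∧ c = A then q - q⁻¹ else 0)
        + (if A < k ∧ c = pr n k then
            -((q - q⁻¹) * q ^ (bar n k - bar n A) * eps n A * eps n k) else 0)) := by
    intro k c
    have h1 : A ≠ pr n A := ne_of_lt h
    simp only [Rm]
    rw [sub_eq_add_neg, add_assoc]
    congr 1
    · by_cases hkc : A = k ∧ pr n A = c
      · rw [if_pos hkc, if_pos hkc]
        simp [h1, pr_pr, zpow_neg, zpow_one]
      · rw [if_neg hkc, if_neg hkc]
    congr 1
    · simp only [h, true_and]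
    · by_cases hkc : A < k ∧ c = pr n k
      · rw [if_pos ⟨hkc.1, by trivial, hkc.2⟩, if_pos hkc]
      · rw [if_neg, if_neg hkc, neg_zero]
        rintro ⟨ha, -, hb⟩; exact hkc ⟨ha, hb⟩
  have e1 : (∑ k, ∑ c, (if A = k ∧ pr n A = c then q⁻¹ else 0) • XX n k c)
      = q⁻¹ • XX n A (pr n A) := by
    simp only [ite_smul, zero_smul]
    exact dcollapse A (pr n A) _ _ (fun x y => by
      constructor <;> rintro ⟨h1', h2'⟩ <;> exact ⟨h1'.symm, h2'.symm⟩)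
  have e2 : (∑ k, ∑ c, (if k = pr n A ∧ c = A then q - q⁻¹ else 0) • XX n k c)
      = (q - q⁻¹) • XX n (pr n A) A := by
    simp only [ite_smul, zero_smul]
    exact dcollapse (pr n A) A _ _ (fun x y => Iff.rfl)
  have e3 : (∑ k, ∑ c, (if A < k ∧ c = pr n k then
        -((q - q⁻¹) * q ^ (bar n k - bar n A) * eps n A * eps n k) else 0) • XX n k c)
      = ∑ k, (if A < k then (-((q - q⁻¹) * q ^ (bar n k - bar n A) * eps n A * eps n k))
          • XX n k (pr n k) else 0) := by
    refine Finset.sum_congr rfl fun k _ => ?_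
    by_cases hk : A < k
    · simp only [hk, true_and, if_true, ite_smul, zero_smul, Finset.sum_ite_eq',
        Finset.mem_univ, if_true]
    · simp [hk]
  have H := key0 A (pr n A)
  simp only [hRm, add_smul, Finset.sum_add_distrib] at H
  rw [e1, e2, e3, XX_zero h, smul_zero, zero_add] at H
  exact H

lemma sU_eq_YY (i j : Fin (2*n)) : sU n i j = YY n j i := by
  rw [sU, YY]
  refine Finset.sum_subset (Finset.subset_univ _) fun l _ hl => ?_
  rw [Finset.mem_Icc, not_and_or] at hl
  rcases hl with hl | hl
  · rw [tbU_zero (not_le.mp hl), mul_zero, smul_zero]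
  · rw [tU_zero (not_le.mp hl), zero_mul, smul_zero]

/-- pr as an equivalence. -/
def prE (n : ℕ) : Equiv.Perm (Fin (2*n)) := ⟨pr n, pr n, pr_pr, pr_pr⟩

lemma sbU_eq_XX (i j : Fin (2*n)) :
    sbU n i j = (eps n i * eps n j) • XX n (pr n i) (pr n j) := by
  rw [sbU, XX]
  congr 1
  rw [← Equiv.sum_comp (prE n) (fun m => eps n m • (tbU n (pr n i) m * tU n (pr n j) m))]
  show (∑ k ∈ Finset.Icc j i, eps n (pr n k) • (tbU n (pr n i) (pr n k) * tU n (pr n j) (pr n k)))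
    = ∑ k, eps n (pr n k) • (tbU n (pr n i) (pr n k) * tU n (pr n j) (pr n k))
  refine Finset.sum_subset (Finset.subset_univ _) fun k _ hk => ?_
  rw [Finset.mem_Icc, not_and_or] at hk
  rcases hk with hk | hk
  · rw [tU_zero (pr_lt_pr (not_le.mp hk)), mul_zero, smul_zero]
  · rw [tbU_zero (pr_lt_pr (not_le.mp hk)), zero_mul, smul_zero]

lemma eps_of_lt {k : Fin (2*n)} (h : (k:ℕ) < n) : eps n k = 1 := if_pos h

lemma eps_pr_of_lt {k : Fin (2*n)} (h : (k:ℕ) < n) : eps n (pr n k) = -1 := by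
  have hk := k.isLt
  rw [eps, if_neg]
  simp only [pr]
  omega

lemma eps_mul_self (k : Fin (2*n)) : eps n k * eps n k = 1 := by
  rw [eps]; split <;> ring

lemma pr_lt_self {k : Fin (2*n)} (h : n ≤ (k:ℕ)) : pr n k < k := by
  have hk := k.isLt
  rw [Fin.lt_def]
  simp only [pr]
  omega

lemma part1 (i : Fin (2*n)) : sbU n i i = eps n (pr n i) • (1 : Usp n) := by
  rw [sbU, Finset.Icc_self, Finset.sum_singleton, tbU_tU_diag, smul_smul, eps_mul_self, one_mul]

lemma part2 (i j : Fin (2*n)) (h : i < j) : sbU n i j = 0 := by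
  rw [sbU, Finset.Icc_eq_empty (not_le.mpr h), Finset.sum_empty, smul_zero]

lemma part3 (i j : Fin (2*n)) (h : j < i) (hne : i ≠ pr n j) :
    sbU n i j = (q * eps n i * eps n j) • sU n (pr n j) (pr n i) := by
  have hb : pr n j ≠ pr n (pr n i) := by rw [pr_pr]; exact fun hh => hne hh.symm
  rw [sbU_eq_XX, key1 _ _ (pr_lt_pr h) hb, sU_eq_YY, smul_smul]
  congr 1
  ring

lemma part4 (j : Fin (2*n)) (hj : (j:ℕ) < n) :
    sbU n (pr n j) j
      = (-(q^2)) • sU n (pr n j) j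
        + (q^2 - 1) • ∑ m ∈ Finset.univ.filter (fun m : Fin (2*n) => j < m ∧ (m : ℕ) < n),
            q ^ (bar n m - bar n j) • sbU n (pr n m) m := by
  have hlt : j < pr n j := lt_pr_iff.mpr hj
  have hX : ∀ k : Fin (2*n), (k:ℕ) < n → XX n k (pr n k) = -(sbU n (pr n k) k) := by
    intro k hk
    rw [sbU_eq_XX, pr_pr, eps_pr_of_lt hk, eps_of_lt hk, mul_one, neg_one_smul', neg_neg]
  have H := key2 j hlt
  -- rewrite the sum as a filtered sum
  rw [← Finset.sum_filter] at H
  -- restrict to k with k < n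
  have hstep : (∑ k ∈ Finset.univ.filter (fun k : Fin (2*n) => j < k),
        (-((q - q⁻¹) * q ^ (bar n k - bar n j) * eps n j * eps n k)) • XX n k (pr n k))
      = ∑ k ∈ Finset.univ.filter (fun k : Fin (2*n) => j < k ∧ (k:ℕ) < n),
        (-((q - q⁻¹) * q ^ (bar n k - bar n j) * eps n j * eps n k)) • XX n k (pr n k) := by
    symm
    refine Finset.sum_subset ?_ ?_
    · intro k hk
      simp only [Finset.mem_filter, Finset.mem_univ, true_and] at *
      exact hk.1
    · intro k hk1 hk2
      simp only [Finset.mem_filter, Finset.mem_univ, true_and] at hk1 hk2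
      have hkn : n ≤ (k:ℕ) := by
        by_contra hc
        exact hk2 ⟨hk1, not_le.mp hc⟩
      rw [XX_zero (pr_lt_self hkn), smul_zero]
  rw [hstep] at H
  have hstep2 : (∑ k ∈ Finset.univ.filter (fun k : Fin (2*n) => j < k ∧ (k:ℕ) < n),
        (-((q - q⁻¹) * q ^ (bar n k - bar n j) * eps n j * eps n k)) • XX n k (pr n k))
      = (q - q⁻¹) • ∑ m ∈ Finset.univ.filter (fun m : Fin (2*n) => j < m ∧ (m : ℕ) < n),
            q ^ (bar n m - bar n j) • sbU n (pr n m) m := by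
    rw [Finset.smul_sum]
    refine Finset.sum_congr rfl fun k hk => ?_
    simp only [Finset.mem_filter, Finset.mem_univ, true_and] at hk
    rw [hX k hk.2, eps_of_lt hk.2, eps_of_lt hj, smul_neg, ← neg_smul, neg_neg, smul_smul]
    congr 1
    ring
  rw [hstep2, hX j hj] at H
  -- now H : q⁻¹ • (-(sbU n (pr n j) j)) + (q-q⁻¹) • Σ' = q • YY n j (pr n j)
  rw [show YY n j (pr n j) = sU n (pr n j) j from (sU_eq_YY _ _).symm] at H
  have H2 := congrArg (fun z => q • z) H
  simp only [smul_add, smul_smul, smul_neg] at H2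
  rw [mul_inv_cancel₀ q_ne_zero, one_smul] at H2
  have hc1 : q * (q - q⁻¹) = q^2 - 1 := by
    rw [mul_sub, mul_inv_cancel₀ q_ne_zero, sq]
  have hc2 : q * q = q^2 := (sq q).symm
  rw [hc1, hc2] at H2
  -- H2 : -(sbU n (pr n j) j) + (q^2-1) • Σ' = q^2 • sU n (pr n j) j
  rw [neg_smul']
  have : sbU n (pr n j) j = (q^2-1) • (∑ m ∈ Finset.univ.filter (fun m : Fin (2*n) => j < m ∧ (m : ℕ) < n),
            q ^ (bar n m - bar n j) • sbU n (pr n m) m) - q^2 • sU n (pr n j) j := by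
    rw [← H2]; abel
  rw [this]; abel

lemma part5 (j : Fin (2*n)) (hj : (j : ℕ) < n) :
    sbU n (pr n j) j ∈ Submodule.span F
      {x : Usp n | ∃ m : Fin (2*n), j ≤ m ∧ (m : ℕ) < n ∧ x = sU n (pr n m) m} := by
  have main : ∀ d : ℕ, ∀ j : Fin (2*n), (j : ℕ) < n → n - (j : ℕ) ≤ d →
      sbU n (pr n j) j ∈ Submodule.span F
        {x : Usp n | ∃ m : Fin (2*n), j ≤ m ∧ (m : ℕ) < n ∧ x = sU n (pr n m) m} := by
    intro d
    induction d with
    | zero => intro j hj hd; omega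
    | succ d ih =>
      intro j hj hd
      rw [part4 j hj]
      refine Submodule.add_mem _ ?_ ?_
      · exact Submodule.smul_mem _ _ (Submodule.subset_span ⟨j, le_refl j, hj, rfl⟩)
      · refine Submodule.smul_mem _ _ (Submodule.sum_mem _ fun m hm => ?_)
        simp only [Finset.mem_filter, Finset.mem_univ, true_and] at hm
        refine Submodule.smul_mem _ _ ?_
        have hmem := ih m hm.2 (by
          have := Fin.lt_def.mp hm.1
          omega)
        refine Submodule.span_mono ?_ hmem
        rintro x ⟨m', hm1, hm2, hx⟩
        exact ⟨m', le_trans (le_of_lt hm.1) hm1, hm2, hx⟩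
  exact main n j hj (by omega)


/-- the entries of S̄ in terms of the entries of S. -/
theorem sbar_via_s (n : ℕ) (hn : 2 ≤ n) :
    (∀ i : Fin (2*n), sbU n i i = eps n (pr n i) • (1 : Usp n)) ∧
    (∀ i j : Fin (2*n), i < j → sbU n i j = 0) ∧
    (∀ i j : Fin (2*n), j < i → i ≠ pr n j →
        sbU n i j = (q * eps n i * eps n j) • sU n (pr n j) (pr n i)) ∧
    (∀ j : Fin (2*n), (j : ℕ) < n →
        sbU n (pr n j) j
          = (-(q^2)) • sU n (pr n j) j
            + (q^2 - 1) • ∑ m ∈ Finset.univ.filter (fun m : Fin (2*n) => j < m ∧ (m : ℕ) < n),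
                q ^ (bar n m - bar n j) • sbU n (pr n m) m) ∧
    (∀ j : Fin (2*n), (j : ℕ) < n →
        sbU n (pr n j) j ∈ Submodule.span F
          {x : Usp n | ∃ m : Fin (2*n), j ≤ m ∧ (m : ℕ) < n ∧ x = sU n (pr n m) m}) := by
  exact ⟨part1, part2, part3, part4, part5⟩

end CI
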